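/- Let $1 < p < \infty$ and let $\sigma$ be a nonnegative Radon measure on $\mathbb{R}^n$. Then the Wolff potential satisfies the weak maximum principle: $\mathbf{W}_{1,p}\sigma(x) \leq c\, \sup_{\operatorname{supp}\sigma} \mathbf{W}_{1,p}\sigma$ for all $x \in \mathbb{R}^n$, where $c = c(n,p) > 0$. Moreover, by lower semicontinuity of $\mathbf{W}_{1,p}\sigma$, one has $\sup_{\operatorname{supp}\sigma}\mathbf{W}_{1,p}\sigma = \|\mathbf{W}_{1,p}\sigma\|_{L^\infty(\mathbb{R}^n, d\sigma)}$. -/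

import Mathlib

/-! If `y` is a point of `supp σ` nearest to `x`, every ball `B(x, r)` charged by `σ` meets
`supp σ` and hence lies in `B(y, 2r)`; the substitution `r ↦ 2r` then gives
`𝐖σ(x) ≤ 2^((n-p)/(p-1)) 𝐖σ(y)`.

For the second claim, `𝐖σ` is lower semicontinuous: by monotone convergence it is the increasing
limit of the potentials built on the balls `B(y, r - δ)`, `δ → 0`, and each of these is bounded by
`𝐖σ` on `B(y, δ)`. A lower semicontinuous function cannot exceed its essential supremum at a point
of the support, and the support is `σ`-conull. -/

open MeasureTheory Metric ENNReal

/-- The Wolff potential `W_{1,p}σ(x) = ∫₀^∞ (σ(B(x,r))/r^{n-p})^{1/(p-1)} dr/r`. -/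
noncomputable def wolff (n : ℕ) (p : ℝ) (σ : Measure (EuclideanSpace ℝ (Fin n)))
    (x : EuclideanSpace ℝ (Fin n)) : ℝ≥0∞ :=
  ∫⁻ r in Set.Ioi (0 : ℝ),
    (σ (ball x r) / ENNReal.ofReal (r ^ ((n : ℝ) - p))) ^ (1 / (p - 1)) / ENNReal.ofReal r

/-- The support of a measure: points all of whose neighborhoods have positive measure. -/
def measureSupport {n : ℕ} (σ : Measure (EuclideanSpace ℝ (Fin n))) :
    Set (EuclideanSpace ℝ (Fin n)) :=
  {x | ∀ r : ℝ, 0 < r → 0 < σ (ball x r)}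

lemma measureSupport_eq_support {n : ℕ} (σ : Measure (EuclideanSpace ℝ (Fin n))) :
    measureSupport σ = σ.support := by
  ext x
  exact nhds_basis_ball.mem_measureSupport.symm

section Support

variable {X : Type*} [TopologicalSpace X] [MeasurableSpace X] {μ : Measure X} {f : X → ℝ≥0∞}

lemma LowerSemicontinuous.le_essSup_of_mem_support (hf : LowerSemicontinuous f) {x : X}
    (hx : x ∈ μ.support) : f x ≤ essSup f μ := by
  by_contra! h
  have hU : {y | essSup f μ < f y} ∈ nhds x := hf.isOpen_preimage _ |>.mem_nhds h
  exact ((Measure.mem_support_iff_forall x).1 hx _ hU).ne' meas_essSup_lt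

lemma LowerSemicontinuous.iSup_support_eq_essSup [HereditarilyLindelofSpace X]
    (hf : LowerSemicontinuous f) : ⨆ x ∈ μ.support, f x = essSup f μ := by
  refine le_antisymm (iSup₂_le fun x hx => hf.le_essSup_of_mem_support hx) ?_
  refine essSup_le_of_ae_le _ ?_
  filter_upwards [Measure.support_mem_ae] with x hx
  exact le_biSup f hx

end Support

section Metric

variable {X : Type*} [PseudoMetricSpace X]

lemma ball_subset_ball_two_mul_of_dist_eq_infDist {s : Set X} {x y z : X} {r : ℝ}
    (hy : dist x y = infDist x s) (hz : z ∈ s) (hzx : z ∈ ball x r) :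
    ball x r ⊆ ball y (2 * r) := by
  have hxy : dist x y < r := hy ▸ (infDist_le_dist_of_mem hz).trans_lt (mem_ball'.1 hzx)
  exact ball_subset_ball' (by linarith)

lemma iSup_measure_ball_sub_one_div [MeasurableSpace X] (μ : Measure X) (x : X) (r : ℝ) :
    ⨆ k : ℕ, μ (ball x (r - 1 / (k + 1))) = μ (ball x r) := by
  have hmono : Monotone fun k : ℕ => ball x (r - 1 / (k + 1)) := fun k l hkl =>
    ball_subset_ball (by gcongr)
  have hunion : ⋃ k : ℕ, ball x (r - 1 / (k + 1)) = ball x r := by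
    refine (Set.iUnion_subset fun k => ball_subset_ball (sub_le_self _ (by positivity))).antisymm
      fun z hz => ?_
    obtain ⟨k, hk⟩ := exists_nat_one_div_lt (sub_pos.2 (mem_ball.1 hz))
    exact Set.mem_iUnion.2 ⟨k, mem_ball.2 (by linarith)⟩
  rw [← hunion, hmono.measure_iUnion]

end Metric

lemma lintegral_Ioi_comp_mul_left (f : ℝ → ℝ≥0∞) {c : ℝ} (hc : 0 < c) :
    ∫⁻ r in Set.Ioi 0, f (c * r) = ENNReal.ofReal c⁻¹ * ∫⁻ s in Set.Ioi 0, f s := by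
  have hemb : MeasurableEmbedding (c * ·) :=
    (Homeomorph.mulLeft₀ c hc.ne').measurableEmbedding
  have hpre : (c * ·) ⁻¹' Set.Ioi 0 = Set.Ioi (0 : ℝ) := by
    ext r
    simp [mul_pos_iff_of_pos_left hc]
  calc ∫⁻ r in Set.Ioi 0, f (c * r) = ∫⁻ s in Set.Ioi 0, f s ∂(volume.map (c * ·)) := by
        rw [hemb.restrict_map, hemb.lintegral_map, hpre]
    _ = ENNReal.ofReal c⁻¹ * ∫⁻ s in Set.Ioi 0, f s := by
        rw [Real.map_volume_mul_left hc.ne', Measure.restrict_smul, lintegral_smul_measure,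
          abs_of_pos (inv_pos.2 hc), smul_eq_mul]

noncomputable def wolffKernel (n : ℕ) (p : ℝ) (m : ℝ≥0∞) (r : ℝ) : ℝ≥0∞ :=
  (m / ENNReal.ofReal (r ^ ((n : ℝ) - p))) ^ (1 / (p - 1)) / ENNReal.ofReal r

section WolffKernel

variable {n : ℕ} {p : ℝ}

lemma wolff_eq_lintegral_wolffKernel (σ : Measure (EuclideanSpace ℝ (Fin n)))
    (x : EuclideanSpace ℝ (Fin n)) :
    wolff n p σ x = ∫⁻ r in Set.Ioi 0, wolffKernel n p (σ (ball x r)) r :=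
  rfl

lemma wolffKernel_mono (hp : 1 ≤ p) (r : ℝ) : Monotone fun m => wolffKernel n p m r := by
  intro m m' h
  have : 0 ≤ 1 / (p - 1) := one_div_nonneg.2 (sub_nonneg.2 hp)
  dsimp only [wolffKernel]
  gcongr

lemma wolffKernel_zero (hp : 1 < p) (r : ℝ) : wolffKernel n p 0 r = 0 := by
  simp [wolffKernel, hp]

lemma continuous_wolffKernel {r : ℝ} (hr : 0 < r) : Continuous fun m => wolffKernel n p m r :=
  ENNReal.continuous_div_const _ (ENNReal.ofReal_pos.2 hr).ne' |>.comp <|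
    ENNReal.continuous_rpow_const.comp <|
      ENNReal.continuous_div_const _ (ENNReal.ofReal_pos.2 (Real.rpow_pos_of_pos hr _)).ne'

lemma measurable_wolffKernel_of_monotone {g : ℝ → ℝ≥0∞} (hg : Monotone g) :
    Measurable fun r => wolffKernel n p (g r) r :=
  ((hg.measurable.div (ENNReal.measurable_ofReal.comp (measurable_id.pow measurable_const))).pow
    measurable_const).div ENNReal.measurable_ofReal

lemma wolffKernel_eq_mul_two_mul (hp : 1 ≤ p) {r : ℝ} (hr : 0 < r) (m : ℝ≥0∞) :
    wolffKernel n p m r = 2 * 2 ^ (((n : ℝ) - p) / (p - 1)) * wolffKernel n p m (2 * r) := by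
  set a := (n : ℝ) - p
  set e := 1 / (p - 1)
  set b := ENNReal.ofReal (r ^ a)
  have he : 0 ≤ e := one_div_nonneg.2 (sub_nonneg.2 hp)
  have h2a : (2 : ℝ≥0∞) ^ a ≠ 0 := (ENNReal.rpow_pos two_pos ofNat_ne_top).ne'
  have h2a' : (2 : ℝ≥0∞) ^ a ≠ ⊤ := ENNReal.rpow_ne_top_of_ne_zero two_ne_zero ofNat_ne_top
  have hball : ENNReal.ofReal ((2 * r) ^ a) = 2 ^ a * b := by
    rw [Real.mul_rpow zero_le_two hr.le, ENNReal.ofReal_mul (by positivity),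
      ← ENNReal.ofReal_rpow_of_pos two_pos, ENNReal.ofReal_ofNat]
  have hrad : ENNReal.ofReal (2 * r) = 2 * ENNReal.ofReal r := by
    rw [ENNReal.ofReal_mul zero_le_two, ENNReal.ofReal_ofNat]
  calc wolffKernel n p m r = 2 * (m / b) ^ e / (2 * ENNReal.ofReal r) := by
        rw [ENNReal.mul_div_mul_left _ _ two_ne_zero ofNat_ne_top]; rfl
    _ = 2 * (2 ^ a * (m / (2 ^ a * b))) ^ e / (2 * ENNReal.ofReal r) := by
        rw [← mul_div_assoc, ENNReal.mul_div_mul_left _ _ h2a h2a']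
    _ = 2 * 2 ^ (a / (p - 1)) * wolffKernel n p m (2 * r) := by
        rw [wolffKernel, hball, hrad, ENNReal.mul_rpow_of_nonneg _ _ he, ← ENNReal.rpow_mul,
          div_eq_mul_one_div a, mul_assoc, mul_div_assoc, mul_div_assoc]

end WolffKernel

section Wolff

variable {n : ℕ} {p : ℝ} {σ : Measure (EuclideanSpace ℝ (Fin n))}

lemma wolff_zero_measure (hp : 1 < p) (x : EuclideanSpace ℝ (Fin n)) : wolff n p 0 x = 0 := by
  simp [wolff_eq_lintegral_wolffKernel, wolffKernel_zero hp]

lemma wolff_le_of_dist_eq_infDist (hp : 1 < p) {x y : EuclideanSpace ℝ (Fin n)}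
    (hy : dist x y = infDist x σ.support) :
    wolff n p σ x ≤ 2 ^ (((n : ℝ) - p) / (p - 1)) * wolff n p σ y := by
  set c : ℝ≥0∞ := 2 ^ (((n : ℝ) - p) / (p - 1))
  have hpointwise : ∀ r ∈ Set.Ioi (0 : ℝ), wolffKernel n p (σ (ball x r)) r ≤
      2 * c * wolffKernel n p (σ (ball y (2 * r))) (2 * r) := by
    intro r hr
    rcases (zero_le : 0 ≤ σ (ball x r)).eq_or_lt with h0 | hpos
    · rw [← h0, wolffKernel_zero hp]
      exact zero_le
    obtain ⟨z, hzx, hz⟩ := Measure.nonempty_inter_support_of_pos hpos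
    rw [wolffKernel_eq_mul_two_mul hp.le hr]
    gcongr
    exact wolffKernel_mono hp.le _
      (measure_mono (ball_subset_ball_two_mul_of_dist_eq_infDist hy hz hzx))
  calc wolff n p σ x
      ≤ ∫⁻ r in Set.Ioi 0, 2 * c * wolffKernel n p (σ (ball y (2 * r))) (2 * r) :=
        setLIntegral_mono' measurableSet_Ioi hpointwise
    _ = 2 * c * (ENNReal.ofReal 2⁻¹ * wolff n p σ y) := by
        rw [lintegral_const_mul' _ _ (by finiteness),
          lintegral_Ioi_comp_mul_left (fun s => wolffKernel n p (σ (ball y s)) s) two_pos]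
        rfl
    _ = c * wolff n p σ y := by
        rw [ENNReal.ofReal_inv_of_pos two_pos, ENNReal.ofReal_ofNat, mul_comm 2 c, mul_assoc,
          ← mul_assoc 2, ENNReal.mul_inv_cancel two_ne_zero ofNat_ne_top, one_mul]

lemma wolff_le_mul_iSup_support (hp : 1 < p) (σ : Measure (EuclideanSpace ℝ (Fin n)))
    (x : EuclideanSpace ℝ (Fin n)) :
    wolff n p σ x ≤ 2 ^ (((n : ℝ) - p) / (p - 1)) * ⨆ y ∈ σ.support, wolff n p σ y := by
  rcases σ.support.eq_empty_or_nonempty with h | h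
  · rw [Measure.support_eq_empty_iff.1 h, wolff_zero_measure hp]
    exact zero_le
  obtain ⟨y, hy, hxy⟩ := Measure.isClosed_support.exists_infDist_eq_dist h x
  exact (wolff_le_of_dist_eq_infDist hp hxy.symm).trans (by gcongr; exact le_biSup _ hy)

lemma lintegral_wolffKernel_shrink_le (hp : 1 ≤ p) {x y : EuclideanSpace ℝ (Fin n)} {δ : ℝ}
    (h : dist x y < δ) :
    ∫⁻ r in Set.Ioi 0, wolffKernel n p (σ (ball y (r - δ))) r ≤ wolff n p σ x :=
  lintegral_mono fun r => wolffKernel_mono hp r <|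
    measure_mono <| ball_subset_ball' <| by rw [dist_comm]; linarith

lemma iSup_lintegral_wolffKernel_shrink (hp : 1 < p) (y : EuclideanSpace ℝ (Fin n)) :
    ⨆ k : ℕ, ∫⁻ r in Set.Ioi 0, wolffKernel n p (σ (ball y (r - 1 / (k + 1)))) r =
      wolff n p σ y := by
  have hmeas (k : ℕ) : Measurable fun r => wolffKernel n p (σ (ball y (r - 1 / (k + 1)))) r :=
    measurable_wolffKernel_of_monotone fun r s h => measure_mono (ball_subset_ball (by linarith))
  have hmono : Monotone fun (k : ℕ) r => wolffKernel n p (σ (ball y (r - 1 / (k + 1)))) r :=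
    fun k l hkl r => wolffKernel_mono hp.le r (measure_mono (ball_subset_ball (by gcongr)))
  rw [← lintegral_iSup hmeas hmono, wolff_eq_lintegral_wolffKernel]
  refine setLIntegral_congr_fun measurableSet_Ioi fun r hr => ?_
  rw [← iSup_measure_ball_sub_one_div σ y r]
  exact ((wolffKernel_mono hp.le r).map_iSup_of_continuousAt
    (continuous_wolffKernel hr).continuousAt (wolffKernel_zero hp r)).symm

lemma lowerSemicontinuous_wolff (hp : 1 < p) : LowerSemicontinuous (wolff n p σ) := by
  intro y a ha
  rw [← iSup_lintegral_wolffKernel_shrink hp] at ha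
  obtain ⟨k, hk⟩ := lt_iSup_iff.1 ha
  filter_upwards [ball_mem_nhds y (by positivity : (0 : ℝ) < 1 / (k + 1))] with x hx
  exact hk.trans_le (lintegral_wolffKernel_shrink_le hp.le hx)

end Wolff

/-- Weak maximum principle for Wolff potentials:
`W_{1,p}σ(x) ≤ c sup_{supp σ} W_{1,p}σ` for all `x`, with `c = c(n,p)`; moreover
`sup_{supp σ} W_{1,p}σ = ‖W_{1,p}σ‖_{L^∞(dσ)}`. -/
theorem wolff_weak_maximum_principle (n : ℕ) (p : ℝ) (hp : 1 < p) :
    (∃ c : ℝ≥0∞, 0 < c ∧ c < ⊤ ∧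
      ∀ (σ : Measure (EuclideanSpace ℝ (Fin n))) (x : EuclideanSpace ℝ (Fin n)),
        wolff n p σ x ≤ c * ⨆ y ∈ measureSupport σ, wolff n p σ y) ∧
    (∀ σ : Measure (EuclideanSpace ℝ (Fin n)),
      (⨆ y ∈ measureSupport σ, wolff n p σ y) = essSup (wolff n p σ) σ) := by
  simp only [measureSupport_eq_support]
  exact ⟨⟨2 ^ (((n : ℝ) - p) / (p - 1)), ENNReal.rpow_pos two_pos ofNat_ne_top,
    (ENNReal.rpow_ne_top_of_ne_zero two_ne_zero ofNat_ne_top).lt_top,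
    wolff_le_mul_iSup_support hp⟩,
    fun σ => (lowerSemicontinuous_wolff hp).iSup_support_eq_essSup⟩
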